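/- Double robustness identity: with Y = D·Y(1)+(1-D)·Y(0), ignorability D ⟂ Y(d)|X, positivity 0 < c ≤ e(X) ≤ 1-c, and arbitrary measurable functions ẽ(X) ∈ [c, 1-c] and b̃₁(X), b̃₀(X) with finite second moments, if either ẽ = e (the true propensity score) almost surely, or both b̃₁(X) = E[Y(1)|X] and b̃₀(X) = E[Y(0)|X] almost surely, then E[ D·Y/ẽ(X) - (D - ẽ(X))·b̃₁(X)/ẽ(X) - (1-D)·Y/(1-ẽ(X)) - (D - ẽ(X))·b̃₀(X)/(1-ẽ(X)) ] = E[Y(1)] - E[Y(0)]. -/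

import Mathlib

/-! Since `D ∈ {0, 1}`, the AIPW integrand equals `Y(1) - Y(0)` plus the two augmentation terms
`(D - ẽ(X)) (Y(d) - b̃_d(X)) / r(X)` with `r = ẽ`, resp. `r = 1 - ẽ`. Conditioning on `X` and using
`D ⟂ Y(d) ∣ X`, such a term has conditional mean `(e(X) - ẽ(X)) (E[Y(d) ∣ X] - b̃_d(X)) / r(X)`,
which vanishes as soon as either factor does. -/

open MeasureTheory ProbabilityTheory

namespace ProbabilityTheory

variable {Ω : Type*} {m mΩ : MeasurableSpace Ω}

theorem indepFun_of_measure_inter_preimage_Iic_rat {ν : Measure Ω} [IsProbabilityMeasure ν]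
    {D Y : Ω → ℝ} (hD : Measurable D) (hY : Measurable Y)
    (h : ∀ q r : ℚ, ν (D ⁻¹' Set.Iic (q : ℝ) ∩ Y ⁻¹' Set.Iic (r : ℝ))
      = ν (D ⁻¹' Set.Iic (q : ℝ)) * ν (Y ⁻¹' Set.Iic (r : ℝ))) :
    IndepFun D Y ν := by
  have comap_eq (Z : Ω → ℝ) : MeasurableSpace.comap Z inferInstance
      = MeasurableSpace.generateFrom ((Z ⁻¹' ·) '' ⋃ q : ℚ, {Set.Iic (q : ℝ)}) := by
    rw [← MeasurableSpace.comap_generateFrom, ← Real.borel_eq_generateFrom_Iic_rat,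
      ← BorelSpace.measurable_eq]
  rw [IndepFun_iff_Indep]
  refine IndepSets.indep hD.comap_le hY.comap_le (Real.isPiSystem_Iic_rat.comap D)
    (Real.isPiSystem_Iic_rat.comap Y) (comap_eq D) (comap_eq Y) ?_
  rintro _ _ ⟨s, hs, rfl⟩ ⟨t, ht, rfl⟩
  simp only [Set.mem_iUnion, Set.mem_singleton_iff] at hs ht
  obtain ⟨q, rfl⟩ := hs
  obtain ⟨r, rfl⟩ := ht
  exact Filter.Eventually.of_forall fun _ ↦ h q r

theorem integrable_sub_mul_sub {μ : Measure Ω} {D Y g b : Ω → ℝ} {C C' : ℝ}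
    (hD : AEStronglyMeasurable D μ)
    (hDC : ∀ᵐ ω ∂μ, ‖D ω‖ ≤ C) (hg : AEStronglyMeasurable g μ) (hgC : ∀ᵐ ω ∂μ, ‖g ω‖ ≤ C')
    (hYint : Integrable Y μ) (hbint : Integrable b μ) :
    Integrable (fun ω ↦ (D ω - g ω) * (Y ω - b ω)) μ := by
  refine (hYint.sub hbint).bdd_mul (c := C + C') (hD.sub hg) ?_
  filter_upwards [hDC, hgC] with ω hDω hgω
  exact (norm_sub_le _ _).trans (add_le_add hDω hgω)

variable [StandardBorelSpace Ω] {μ : Measure Ω} [IsFiniteMeasure μ]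
  {D Y : Ω → ℝ}

/-- The rational half-lines form a countable generating π-system, so the conditional
independence identities for them hold simultaneously for a.e. `ω`. -/
theorem CondIndepFun.ae_indepFun_condExpKernel (hm : m ≤ mΩ) (hD : Measurable D)
    (hY : Measurable Y) (h : CondIndepFun m hm D Y μ) :
    ∀ᵐ ω ∂μ, IndepFun D Y (condExpKernel μ m ω) := by
  have h_rat : ∀ᵐ ω ∂μ, ∀ q r : ℚ,
      condExpKernel μ m ω (D ⁻¹' Set.Iic (q : ℝ) ∩ Y ⁻¹' Set.Iic (r : ℝ))
        = condExpKernel μ m ω (D ⁻¹' Set.Iic (q : ℝ))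
          * condExpKernel μ m ω (Y ⁻¹' Set.Iic (r : ℝ)) := by
    simp only [ae_all_iff]
    exact fun q r ↦ ae_of_ae_trim hm
      (h.measure_inter_preimage_eq_mul _ _ measurableSet_Iic measurableSet_Iic)
  filter_upwards [h_rat] with ω hω
  exact indepFun_of_measure_inter_preimage_Iic_rat hD hY hω

theorem CondIndepFun.condExp_mul_ae_eq (hm : m ≤ mΩ) (hD : Measurable D) (hY : Measurable Y)
    (h : CondIndepFun m hm D Y μ) (hDint : Integrable D μ) (hYint : Integrable Y μ)
    (hDYint : Integrable (D * Y) μ) :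
    μ[D * Y | m] =ᵐ[μ] μ[D | m] * μ[Y | m] := by
  filter_upwards [condExp_ae_eq_integral_condExpKernel hm hDYint,
    condExp_ae_eq_integral_condExpKernel hm hDint, condExp_ae_eq_integral_condExpKernel hm hYint,
    h.ae_indepFun_condExpKernel hm hD hY] with ω hDY hD' hY' hind
  rw [hDY, Pi.mul_apply, hD', hY']
  exact hind.integral_fun_mul_eq_mul_integral hD.aestronglyMeasurable hY.aestronglyMeasurable

theorem CondIndepFun.condExp_sub_mul_sub_ae_eq (hm : m ≤ mΩ) (hD : Measurable D)
    (hY : Measurable Y) (h : CondIndepFun m hm D Y μ) {g b : Ω → ℝ} {C C' : ℝ}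
    (hDC : ∀ᵐ ω ∂μ, ‖D ω‖ ≤ C) (hg : StronglyMeasurable[m] g) (hgC : ∀ᵐ ω ∂μ, ‖g ω‖ ≤ C')
    (hb : StronglyMeasurable[m] b) (hYint : Integrable Y μ) (hbint : Integrable b μ) :
    μ[fun ω ↦ (D ω - g ω) * (Y ω - b ω) | m] =ᵐ[μ] (μ[D | m] - g) * (μ[Y | m] - b) := by
  have hDint : Integrable D μ :=
    (integrable_const C).mono' hD.aestronglyMeasurable hDC
  have hDY : Integrable (D * Y) μ := hYint.bdd_mul hD.aestronglyMeasurable hDC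
  have hbD : Integrable (b * D) μ := hbint.mul_bdd hD.aestronglyMeasurable hDC
  have hgYb : Integrable (g * (Y - b)) μ :=
    (hYint.sub hbint).bdd_mul (hg.mono hm).aestronglyMeasurable hgC
  have hsplit : (fun ω ↦ (D ω - g ω) * (Y ω - b ω)) = D * Y - b * D - g * (Y - b) := by
    ext ω; simp only [Pi.sub_apply, Pi.mul_apply]; ring
  rw [hsplit]
  filter_upwards [condExp_sub (m := m) (hDY.sub hbD) hgYb, condExp_sub (m := m) hDY hbD,
    h.condExp_mul_ae_eq hm hD hY hDint hYint hDY,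
    condExp_mul_of_stronglyMeasurable_left hb hbD hDint,
    condExp_stronglyMeasurable_mul_of_bound hm hg (hYint.sub hbint) C' hgC,
    condExp_sub (m := m) hYint hbint] with ω h1 h2 hDYω hbDω hgYbω hYbω
  rw [h1, Pi.sub_apply, h2, Pi.sub_apply, hDYω, hbDω, hgYbω]
  simp only [Pi.mul_apply, Pi.sub_apply, hYbω, condExp_of_stronglyMeasurable hm hb hbint]
  ring

theorem CondIndepFun.integral_sub_mul_sub_mul_eq_zero (hm : m ≤ mΩ) (hD : Measurable D)
    (hY : Measurable Y) (h : CondIndepFun m hm D Y μ) {g b w : Ω → ℝ} {C C' C'' : ℝ}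
    (hDC : ∀ᵐ ω ∂μ, ‖D ω‖ ≤ C) (hg : StronglyMeasurable[m] g) (hgC : ∀ᵐ ω ∂μ, ‖g ω‖ ≤ C')
    (hb : StronglyMeasurable[m] b) (hYint : Integrable Y μ) (hbint : Integrable b μ)
    (hw : StronglyMeasurable[m] w) (hwC : ∀ᵐ ω ∂μ, ‖w ω‖ ≤ C'')
    (hgb : g =ᵐ[μ] μ[D | m] ∨ b =ᵐ[μ] μ[Y | m]) :
    ∫ ω, (D ω - g ω) * (Y ω - b ω) * w ω ∂μ = 0 := by
  have hprod_int := integrable_sub_mul_sub hD.aestronglyMeasurable hDC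
    (hg.mono hm).aestronglyMeasurable hgC hYint hbint
  have hfactor : (μ[D | m] - g) * (μ[Y | m] - b) =ᵐ[μ] 0 := by
    rcases hgb with hgb | hgb <;> filter_upwards [hgb] with ω hω <;> simp [hω]
  have hcond : μ[w * fun ω ↦ (D ω - g ω) * (Y ω - b ω) | m] =ᵐ[μ] 0 := by
    filter_upwards [condExp_stronglyMeasurable_mul_of_bound hm hw hprod_int C'' hwC,
      h.condExp_sub_mul_sub_ae_eq hm hD hY hDC hg hgC hb hYint hbint, hfactor]
      with ω hpull hcov hzero
    rw [hpull, Pi.mul_apply, hcov, hzero, Pi.zero_apply, mul_zero]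
  calc ∫ ω, (D ω - g ω) * (Y ω - b ω) * w ω ∂μ
      = ∫ ω, (μ[w * fun ω ↦ (D ω - g ω) * (Y ω - b ω) | m]) ω ∂μ := by
        rw [integral_condExp hm]; simp only [Pi.mul_apply, mul_comm]
    _ = 0 := by rw [integral_congr_ae hcond, integral_zero']

theorem norm_inv_le_inv_of_le {a c : ℝ} (hc : 0 < c) (hca : c ≤ a) : ‖a⁻¹‖ ≤ c⁻¹ := by
  rw [norm_inv, Real.norm_of_nonneg (hc.le.trans hca)]
  exact inv_anti₀ hc hca

noncomputable def augmentation {Ω 𝒳 : Type*} (X : Ω → 𝒳) (D Y : Ω → ℝ) (g b r : 𝒳 → ℝ) (ω : Ω) :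
    ℝ :=
  (D ω - g (X ω)) * (Y ω - b (X ω)) / r (X ω)

section Covariate

variable {Ω 𝒳 : Type*} {mΩ : MeasurableSpace Ω} [mX : MeasurableSpace 𝒳] {μ : Measure Ω}
  {X : Ω → 𝒳} {D Y : Ω → ℝ} {g b r : 𝒳 → ℝ} {c C C' : ℝ}

theorem integrable_augmentation (hX : Measurable X) (hD : AEStronglyMeasurable D μ)
    (hDC : ∀ᵐ ω ∂μ, ‖D ω‖ ≤ C) (hg : Measurable g) (hgC : ∀ x, ‖g x‖ ≤ C')
    (hYint : Integrable Y μ) (hbint : Integrable (fun ω ↦ b (X ω)) μ) (hr : Measurable r)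
    (hc : 0 < c) (hrc : ∀ x, c ≤ r x) :
    Integrable (augmentation X D Y g b r) μ := by
  unfold augmentation
  simp only [div_eq_mul_inv]
  exact (integrable_sub_mul_sub hD hDC (hg.comp hX).aestronglyMeasurable
    (ae_of_all _ fun ω ↦ hgC (X ω)) hYint hbint).mul_bdd (hr.comp hX).inv.aestronglyMeasurable
    (ae_of_all _ fun ω ↦ norm_inv_le_inv_of_le hc (hrc (X ω)))

theorem CondIndepFun.integral_augmentation_eq_zero [StandardBorelSpace Ω] [IsFiniteMeasure μ]
    (hX : Measurable X) (hD : Measurable D) (hY : Measurable Y)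
    (h : CondIndepFun (MeasurableSpace.comap X mX) hX.comap_le D Y μ)
    (hDC : ∀ᵐ ω ∂μ, ‖D ω‖ ≤ C) (hg : Measurable g) (hgC : ∀ x, ‖g x‖ ≤ C') (hb : Measurable b)
    (hYint : Integrable Y μ) (hbint : Integrable (fun ω ↦ b (X ω)) μ) (hr : Measurable r)
    (hc : 0 < c) (hrc : ∀ x, c ≤ r x)
    (hgb : (fun ω ↦ g (X ω)) =ᵐ[μ] μ[D | MeasurableSpace.comap X mX] ∨
      (fun ω ↦ b (X ω)) =ᵐ[μ] μ[Y | MeasurableSpace.comap X mX]) :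
    ∫ ω, augmentation X D Y g b r ω ∂μ = 0 := by
  have hXm : Measurable[MeasurableSpace.comap X mX] X := comap_measurable X
  simp only [augmentation, div_eq_mul_inv]
  exact h.integral_sub_mul_sub_mul_eq_zero hX.comap_le hD hY hDC (hg.comp hXm).stronglyMeasurable
    (ae_of_all _ fun ω ↦ hgC (X ω)) (hb.comp hXm).stronglyMeasurable hYint hbint
    (hr.comp hXm).inv.stronglyMeasurable
    (ae_of_all _ fun ω ↦ norm_inv_le_inv_of_le hc (hrc (X ω))) hgb

end Covariate

end ProbabilityTheory

theorem aipw_integrand_eq {d e y1 y0 b1 b0 : ℝ} (hd : d = 0 ∨ d = 1) (he : e ≠ 0)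
    (he' : 1 - e ≠ 0) :
    d * (d * y1 + (1 - d) * y0) / e - (d - e) * b1 / e
        - (1 - d) * (d * y1 + (1 - d) * y0) / (1 - e) - (d - e) * b0 / (1 - e)
      = y1 - y0 + (d - e) * (y1 - b1) / e + (d - e) * (y0 - b0) / (1 - e) := by
  rcases hd with rfl | rfl <;> field_simp <;> ring

theorem doubly_robust_identification_general
    {Ω 𝒳 : Type*} {mΩ : MeasurableSpace Ω} [StandardBorelSpace Ω]
    [mX : MeasurableSpace 𝒳]
    (μ : Measure Ω) [IsProbabilityMeasure μ]
    (X : Ω → 𝒳) (hX : Measurable X)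
    (D : Ω → ℝ) (hD : Measurable D) (hD01 : ∀ ω, D ω = 0 ∨ D ω = 1)
    (Y1 Y0 : Ω → ℝ) (hY1 : Measurable Y1) (hY0 : Measurable Y0)
    (Y : Ω → ℝ) (hYdef : ∀ ω, Y ω = D ω * Y1 ω + (1 - D ω) * Y0 ω)
    (e etil b1til b0til : 𝒳 → ℝ)
    (hetil : Measurable etil)
    (hb1 : Measurable b1til) (hb0 : Measurable b0til)
    (c : ℝ) (hc : 0 < c)
    (hpos' : ∀ x, c ≤ etil x ∧ etil x ≤ 1 - c)
    (hps : (fun ω => e (X ω)) =ᵐ[μ] μ[D | MeasurableSpace.comap X mX])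
    (hig1 : CondIndepFun (MeasurableSpace.comap X mX) hX.comap_le D Y1 μ)
    (hig0 : CondIndepFun (MeasurableSpace.comap X mX) hX.comap_le D Y0 μ)
    (hintY1 : Integrable Y1 μ) (hintY0 : Integrable Y0 μ)
    (hL2b1 : Integrable (fun ω => (b1til (X ω))^2) μ)
    (hL2b0 : Integrable (fun ω => (b0til (X ω))^2) μ)
    (hDR : ((fun ω => etil (X ω)) =ᵐ[μ] fun ω => e (X ω)) ∨
      (((fun ω => b1til (X ω)) =ᵐ[μ] μ[Y1 | MeasurableSpace.comap X mX]) ∧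
        ((fun ω => b0til (X ω)) =ᵐ[μ] μ[Y0 | MeasurableSpace.comap X mX]))) :
    (∫ ω, (D ω * Y ω / etil (X ω)
        - (D ω - etil (X ω)) * b1til (X ω) / etil (X ω)
        - (1 - D ω) * Y ω / (1 - etil (X ω))
        - (D ω - etil (X ω)) * b0til (X ω) / (1 - etil (X ω))) ∂μ)
      = (∫ ω, Y1 ω ∂μ) - ∫ ω, Y0 ω ∂μ := by
  have hDC : ∀ᵐ ω ∂μ, ‖D ω‖ ≤ 1 := ae_of_all _ fun ω ↦ by rcases hD01 ω with h | h <;> simp [h]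
  have hetilC : ∀ x, ‖etil x‖ ≤ 1 := fun x ↦
    abs_le.2 ⟨by linarith [hc, (hpos' x).1], by linarith [hc, (hpos' x).2]⟩
  have hc1 : ∀ x, c ≤ etil x := fun x ↦ (hpos' x).1
  have hc0 : ∀ x, c ≤ 1 - etil x := fun x ↦ by linarith [(hpos' x).2]
  have hb_int {b : 𝒳 → ℝ} (hb : Measurable b) (hL2 : Integrable (fun ω ↦ b (X ω) ^ 2) μ) :
      Integrable (fun ω ↦ b (X ω)) μ :=
    ((memLp_two_iff_integrable_sq (hb.comp hX).aestronglyMeasurable).2 hL2).integrable one_le_two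
  have hY_int : Integrable (fun ω ↦ Y1 ω - Y0 ω) μ := hintY1.sub hintY0
  have hint1 := integrable_augmentation hX hD.aestronglyMeasurable hDC hetil hetilC hintY1
    (hb_int hb1 hL2b1) hetil hc hc1
  have hint0 := integrable_augmentation hX hD.aestronglyMeasurable hDC hetil hetilC hintY0
    (hb_int hb0 hL2b0) (r := fun x ↦ 1 - etil x) (measurable_const.sub hetil) hc hc0
  have hzero1 := hig1.integral_augmentation_eq_zero hX hD hY1 hDC hetil hetilC hb1 hintY1
    (hb_int hb1 hL2b1) hetil hc hc1 (hDR.imp (·.trans hps) (·.1))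
  have hzero0 := hig0.integral_augmentation_eq_zero hX hD hY0 hDC hetil hetilC hb0 hintY0
    (hb_int hb0 hL2b0) (r := fun x ↦ 1 - etil x) (measurable_const.sub hetil) hc hc0
    (hDR.imp (·.trans hps) (·.2))
  calc _ = ∫ ω, (Y1 ω - Y0 ω + augmentation X D Y1 etil b1til etil ω
        + augmentation X D Y0 etil b0til (fun x ↦ 1 - etil x) ω) ∂μ := by
        refine integral_congr_ae (ae_of_all _ fun ω ↦ ?_)
        simp only [hYdef, augmentation]
        exact aipw_integrand_eq (hD01 ω) (hc.trans_le (hc1 _)).ne' (hc.trans_le (hc0 _)).ne'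
    _ = (∫ ω, Y1 ω ∂μ) - ∫ ω, Y0 ω ∂μ := by
        rw [integral_add (hY_int.fun_add hint1) hint0, integral_add hY_int hint1,
          integral_sub hintY1 hintY0, hzero1, hzero0, add_zero, add_zero]

/-- Double robustness of the augmented IPW (doubly robust) functional: if either the
working propensity score `ẽ` equals the true propensity score a.s., or the working
outcome regressions `b̃₁, b̃₀` equal `E[Y(1)∣X], E[Y(0)∣X]` a.s., then the AIPW
functional identifies `E[Y(1)] - E[Y(0)]`. -/
theorem doubly_robust_identification
    {Ω 𝒳 : Type*} {mΩ : MeasurableSpace Ω} [StandardBorelSpace Ω]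
    [mX : MeasurableSpace 𝒳]
    (μ : Measure Ω) [IsProbabilityMeasure μ]
    (X : Ω → 𝒳) (hX : Measurable X)
    (D : Ω → ℝ) (hD : Measurable D) (hD01 : ∀ ω, D ω = 0 ∨ D ω = 1)
    (Y1 Y0 : Ω → ℝ) (hY1 : Measurable Y1) (hY0 : Measurable Y0)
    (Y : Ω → ℝ) (hYdef : ∀ ω, Y ω = D ω * Y1 ω + (1 - D ω) * Y0 ω)
    (e etil b1til b0til : 𝒳 → ℝ)
    (he : Measurable e) (hetil : Measurable etil)
    (hb1 : Measurable b1til) (hb0 : Measurable b0til)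
    (c : ℝ) (hc : 0 < c) (hc' : c < 1)
    (hpos : ∀ x, c ≤ e x ∧ e x ≤ 1 - c)
    (hpos' : ∀ x, c ≤ etil x ∧ etil x ≤ 1 - c)
    (hps : (fun ω => e (X ω)) =ᵐ[μ] μ[D | MeasurableSpace.comap X mX])
    (hig1 : CondIndepFun (MeasurableSpace.comap X mX) hX.comap_le D Y1 μ)
    (hig0 : CondIndepFun (MeasurableSpace.comap X mX) hX.comap_le D Y0 μ)
    (hintY1 : Integrable Y1 μ) (hintY0 : Integrable Y0 μ)
    (hL2b1 : Integrable (fun ω => (b1til (X ω))^2) μ)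
    (hL2b0 : Integrable (fun ω => (b0til (X ω))^2) μ)
    (hint : Integrable (fun ω =>
        D ω * Y ω / etil (X ω)
        - (D ω - etil (X ω)) * b1til (X ω) / etil (X ω)
        - (1 - D ω) * Y ω / (1 - etil (X ω))
        - (D ω - etil (X ω)) * b0til (X ω) / (1 - etil (X ω))) μ)
    (hDR : ((fun ω => etil (X ω)) =ᵐ[μ] fun ω => e (X ω)) ∨
      (((fun ω => b1til (X ω)) =ᵐ[μ] μ[Y1 | MeasurableSpace.comap X mX]) ∧
        ((fun ω => b0til (X ω)) =ᵐ[μ] μ[Y0 | MeasurableSpace.comap X mX]))) :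
    (∫ ω, (D ω * Y ω / etil (X ω)
        - (D ω - etil (X ω)) * b1til (X ω) / etil (X ω)
        - (1 - D ω) * Y ω / (1 - etil (X ω))
        - (D ω - etil (X ω)) * b0til (X ω) / (1 - etil (X ω))) ∂μ)
      = (∫ ω, Y1 ω ∂μ) - ∫ ω, Y0 ω ∂μ :=
  doubly_robust_identification_general (mΩ := mΩ) (mX := mX) μ X hX D hD hD01 Y1 Y0 hY1 hY0 Y hYdef
    e etil b1til b0til hetil hb1 hb0 c hc hpos' hps hig1 hig0 hintY1 hintY0 hL2b1 hL2b0 hDR
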